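/- Product decomposition of pruning intervals: for a rooted tree T and nonempty H ⊆ E, the interval [H, ∅] of the pruning poset is order-isomorphic to the direct product over the minimal elements e of H of the intervals [H_e, ∅], where H_e = {f ∈ H : f ≽ e}. -/

import Mathlib

/-- A finite rooted tree, encoded by its tree partial order on the vertex set `V`:
the root is the bottom element `⊥`, and any two ancestors of a common vertex are
comparable. -/
def TreeOrder (V : Type*) [PartialOrder V] [OrderBot V] : Prop :=
  ∀ a b c : V, b ≤ a → c ≤ a → (b ≤ c ∨ c ≤ b)

/-- Edges of the rooted tree, identified with their upper ends (the non-root vertices).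
The induced partial order on edges is the subtype order. -/
abbrev Edge (V : Type*) [PartialOrder V] [OrderBot V] := {v : V // v ≠ ⊥}

/-- The stump set `V_γ(H)`: the vertex set of the connected component of the root
in the forest `T − H`. -/
def stump {V : Type*} [PartialOrder V] [OrderBot V] (H : Set (Edge V)) : Set V :=
  {v | ∀ e ∈ H, ¬ (e.val ≤ v)}

/-- The pruning order: `H ≼_P K` iff `H = K ∪ A` for some set `A` of edges of the
stump tree of `T − K`. -/
def pleP {V : Type*} [PartialOrder V] [OrderBot V] (H K : Set (Edge V)) : Prop :=
  ∃ A : Set (Edge V), A ⊆ {e : Edge V | e.val ∈ stump K} ∧ H = K ∪ A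

/-- `M(H)`: the set of minimal elements of `H` with respect to the edge order. -/
def minimalsIn {V : Type*} [PartialOrder V] [OrderBot V] (H : Set (Edge V)) :
    Set (Edge V) :=
  {e ∈ H | ∀ f ∈ H, f ≤ e → f = e}

/-- `H_e = {f ∈ H : f ≽ e}`. -/
def upIn {V : Type*} [PartialOrder V] [OrderBot V] (H : Set (Edge V)) (e : Edge V) :
    Set (Edge V) :=
  {f ∈ H | e ≤ f}

section Aux

variable {V : Type*} [PartialOrder V] [OrderBot V]

lemma pleP_empty' (I : Set (Edge V)) : pleP I (∅ : Set (Edge V)) := by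
  refine ⟨I, ?_, (Set.empty_union I).symm⟩
  intro e _
  simp [stump]

lemma pleP_iff' (H I : Set (Edge V)) :
    pleP H I ↔ I ⊆ H ∧ ∀ x ∈ I, ∀ f ∈ H, x ≤ f → f ∈ I := by
  constructor
  · rintro ⟨A, hA, rfl⟩
    refine ⟨Set.subset_union_left, ?_⟩
    rintro x hx f hf hle
    rcases hf with hf | hf
    · exact hf
    · exact absurd hle (hA hf x hx)
  · rintro ⟨hsub, hup⟩
    refine ⟨H \ I, ?_, (Set.union_diff_cancel hsub).symm⟩
    rintro f ⟨hfH, hfI⟩ e he hle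
    exact hfI (hup e he f hfH hle)

lemma exists_minimal_le [Fintype V] (H : Set (Edge V)) {f : Edge V} (hf : f ∈ H) :
    ∃ e ∈ minimalsIn H, e ≤ f := by
  have hfin : ({g ∈ H | g ≤ f}).Finite := Set.toFinite _
  obtain ⟨e, ⟨heH, hef⟩, hmin⟩ :=
    Set.Finite.exists_minimalFor id _ hfin ⟨f, hf, le_refl f⟩
  refine ⟨e, ⟨heH, ?_⟩, hef⟩
  intro g hg hge
  exact le_antisymm hge (hmin ⟨hg, le_trans hge hef⟩ hge)

lemma min_eq (hT : TreeOrder V) {H : Set (Edge V)} {e₁ e₂ f : Edge V}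
    (h1 : e₁ ∈ minimalsIn H) (h2 : e₂ ∈ minimalsIn H)
    (hle1 : e₁ ≤ f) (hle2 : e₂ ≤ f) : e₁ = e₂ := by
  rcases hT f.val e₁.val e₂.val hle1 hle2 with h | h
  · exact h2.2 e₁ h1.1 h
  · exact (h1.2 e₂ h2.1 h).symm

end Aux

/-- for nonempty `H`, the interval `[H, ∅]` of the pruning poset is
order-isomorphic to the direct product, over the minimal elements `e` of `H`, of the
intervals `[H_e, ∅]`, the product being ordered componentwise. -/
theorem pruning_interval_product_iso {V : Type*} [Fintype V] [PartialOrder V]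
    [OrderBot V] (hT : TreeOrder V) (H : Set (Edge V)) (hH : H.Nonempty) :
    ∃ φ : {I : Set (Edge V) // pleP H I ∧ pleP I (∅ : Set (Edge V))} ≃
          (∀ _e : minimalsIn H, {I : Set (Edge V) //
              pleP (upIn H _e.val) I ∧ pleP I (∅ : Set (Edge V))}),
      ∀ a b, pleP a.val b.val ↔ ∀ e : minimalsIn H, pleP (φ a e).val (φ b e).val := by
  classical
  -- component map : restrict I to the branch above e
  have comp : ∀ (I : Set (Edge V)), pleP H I → ∀ e : minimalsIn H,
      pleP (upIn H e.val) (I ∩ upIn H e.val) := by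
    intro I hI e
    rw [pleP_iff'] at hI ⊢
    refine ⟨Set.inter_subset_right, ?_⟩
    rintro x ⟨hxI, -⟩ f hf hle
    exact ⟨hI.2 x hxI f hf.1 hle, hf⟩
  -- gluing map
  have glue : ∀ (J : ∀ _e : minimalsIn H, {I : Set (Edge V) //
      pleP (upIn H _e.val) I ∧ pleP I (∅ : Set (Edge V))}),
      pleP H (⋃ e : minimalsIn H, (J e).val) := by
    intro J
    rw [pleP_iff']
    have hsub : ∀ e : minimalsIn H, (J e).val ⊆ upIn H e.val := by
      intro e
      exact ((pleP_iff' _ _).mp (J e).2.1).1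
    constructor
    · intro x hx
      obtain ⟨e, hxe⟩ := Set.mem_iUnion.mp hx
      exact (hsub e hxe).1
    · intro x hx f hf hle
      obtain ⟨e, hxe⟩ := Set.mem_iUnion.mp hx
      have hx' := hsub e hxe
      have hfe : f ∈ upIn H e.val := ⟨hf, le_trans hx'.2 hle⟩
      exact Set.mem_iUnion.mpr ⟨e, ((pleP_iff' _ _).mp (J e).2.1).2 x hxe f hfe hle⟩
  refine ⟨⟨fun I e => ⟨I.val ∩ upIn H e.val, comp I.val I.2.1 e, pleP_empty' _⟩,
      fun J => ⟨⋃ e : minimalsIn H, (J e).val, glue J, pleP_empty' _⟩, ?_, ?_⟩, ?_⟩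
  · -- left inverse
    rintro ⟨I, hI1, hI2⟩
    apply Subtype.ext
    ext x
    simp only [Set.mem_iUnion, Set.mem_inter_iff]
    constructor
    · rintro ⟨e, hxI, -⟩; exact hxI
    · intro hxI
      have hxH : x ∈ H := ((pleP_iff' _ _).mp hI1).1 hxI
      obtain ⟨e, heM, hex⟩ := exists_minimal_le H hxH
      exact ⟨⟨e, heM⟩, hxI, hxH, hex⟩
  · -- right inverse
    intro J
    funext e
    apply Subtype.ext
    ext x
    simp only [Set.mem_inter_iff, Set.mem_iUnion]
    have hsub : ∀ e' : minimalsIn H, (J e').val ⊆ upIn H e'.val := by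
      intro e'
      exact ((pleP_iff' _ _).mp (J e').2.1).1
    constructor
    · rintro ⟨⟨e', hxe'⟩, hxup⟩
      have h1 := hsub e' hxe'
      have : e' = e := Subtype.ext (min_eq hT e'.2 e.2 h1.2 hxup.2)
      exact this ▸ hxe'
    · intro hx
      exact ⟨⟨e, hx⟩, hsub e hx⟩
  · -- order iso property
    rintro ⟨a, haH, -⟩ ⟨b, hbH, -⟩
    simp only
    constructor
    · intro hab e
      rw [pleP_iff'] at hab ⊢
      refine ⟨Set.inter_subset_inter_left _ hab.1, ?_⟩
      rintro x ⟨hxb, -⟩ f ⟨hfa, hfe⟩ hle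
      exact ⟨hab.2 x hxb f hfa hle, hfe⟩
    · intro hcomp
      rw [pleP_iff']
      have haH' := (pleP_iff' _ _).mp haH
      have hbH' := (pleP_iff' _ _).mp hbH
      constructor
      · intro x hxb
        have hxH : x ∈ H := hbH'.1 hxb
        obtain ⟨e, heM, hex⟩ := exists_minimal_le H hxH
        have := ((pleP_iff' _ _).mp (hcomp ⟨e, heM⟩)).1 ⟨hxb, hxH, hex⟩
        exact this.1
      · intro x hxb f hfa hle
        have hxH : x ∈ H := hbH'.1 hxb
        obtain ⟨e, heM, hex⟩ := exists_minimal_le H hxH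
        have hfH : f ∈ H := haH'.1 hfa
        have hf' : f ∈ a ∩ upIn H e := ⟨hfa, hfH, le_trans hex hle⟩
        have := ((pleP_iff' _ _).mp (hcomp ⟨e, heM⟩)).2 x ⟨hxb, hxH, hex⟩ f hf' hle
        exact this.1
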